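/- Define the real odometer V : [0,1) → [0,1) by V(y) = y − (1−d^{-N₀(y)}) + d^{-(N₀(y)+1)}, where N₀(y) is the unique n ∈ ℕ with y ∈ [1−d^{-n}, 1−d^{-(n+1)}). For every k ∈ ℕ and every x ∈ A_k = [0, d^{-k}), with r(x) = min{m ≥ 1 : T_α^m(x) ∈ A_k} the first return time (which exists), the induced map of T_α on A_k satisfies T_α^{r(x)}(x) = d^{-k}·V(d^k·x). -/
import Mathlib


open MeasureTheory Filter Topology Real

noncomputable section

/-- Partial sums `α^{(m-1)} = Σ_{j<m} α_j d^{-(j+1)}`. -/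
def chaconPartial (d : ℕ) (a : ℕ → ℕ) (m : ℕ) : ℝ :=
  ∑ j ∈ Finset.range m, (a j : ℝ) * (d : ℝ) ^ (-(j : ℤ) - 1)

/-- `α' = Σ_{j∈ℕ} α_j d^{-(j+1)}`. -/
def chaconSum (d : ℕ) (a : ℕ → ℕ) : ℝ :=
  ∑' j : ℕ, (a j : ℝ) * (d : ℝ) ^ (-(j : ℤ) - 1)

/-- The index `N(x)` of the unique member `Z_n` of the partition containing `x`:
for `x ∈ [0,1)` it is the unique `n` with `x ∈ [1-d^{-n}, 1-d^{-(n+1)})`, and for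
`x ∈ [1, 1+α')` it is the unique `n` with `x ∈ [1+α^{(n-1)}, 1+α^{(n)})`. -/
def chaconIndex (d : ℕ) (a : ℕ → ℕ) (x : ℝ) : ℕ :=
  if x < 1 then sInf {n : ℕ | x < 1 - (d : ℝ) ^ (-(n : ℤ) - 1)}
  else sInf {n : ℕ | x < 1 + chaconPartial d a (n + 1)}

/-- The Chacon transformation `T_α` on `[0, 1+α')`. -/
def chaconMap (d : ℕ) (a : ℕ → ℕ) (x : ℝ) : ℝ :=
  let n := chaconIndex d a x
  if x < 1 then
    if x < 1 - 2 * (d : ℝ) ^ (-(n : ℤ) - 1) then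
      x - (1 - (d : ℝ) ^ (-(n : ℤ))) + (d : ℝ) ^ (-(n : ℤ) - 1)
    else
      x + 2 * (d : ℝ) ^ (-(n : ℤ) - 1) + chaconPartial d a n
  else
    if 1 + chaconPartial d a (n + 1) - (d : ℝ) ^ (-(n : ℤ) - 1) ≤ x then
      x - (1 + chaconPartial d a (n + 1) - (d : ℝ) ^ (-(n : ℤ) - 1))
        + ((d : ℝ) - 1) * (d : ℝ) ^ (-(n : ℤ) - 1)
    else
      x + (d : ℝ) ^ (-(n : ℤ) - 1)

/-- Heights of the Rokhlin towers: `h_0 = 1`, `h_{k+1} = d h_k + α_k`. -/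
def chaconHeight (d : ℕ) (a : ℕ → ℕ) : ℕ → ℕ
  | 0 => 1
  | k + 1 => d * chaconHeight d a k + a k

/-- `N₀(y)`: for `y ∈ [0,1)`, the unique `n ∈ ℕ` with `y ∈ [1−d^{-n}, 1−d^{-(n+1)})`
(realized as the least `n` with `y < 1−d^{-(n+1)}`). -/
def indexN₀ (d : ℕ) (y : ℝ) : ℕ :=
  sInf {n : ℕ | y < 1 - (d : ℝ) ^ (-(n : ℤ) - 1)}

/-- The real odometer `V(y) = y − (1−d^{-N₀(y)}) + d^{-(N₀(y)+1)}` on `[0,1)`. -/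
def realOdometer (d : ℕ) (y : ℝ) : ℝ :=
  y - (1 - (d : ℝ) ^ (-(indexN₀ d y : ℤ))) + (d : ℝ) ^ (-(indexN₀ d y : ℤ) - 1)

lemma hd0' (d : ℕ) (hd : 2 ≤ d) : (0:ℝ) < (d:ℝ) := by
  have : (0:ℕ) < d := by omega
  exact_mod_cast this

lemma hd1' (d : ℕ) (hd : 2 ≤ d) : (1:ℝ) < (d:ℝ) := by
  have : (1:ℕ) < d := by omega
  exact_mod_cast this

lemma zpow_mul_d (d : ℕ) (hd : 2 ≤ d) (z : ℤ) : (d:ℝ) ^ (z - 1) * (d:ℝ) = (d:ℝ) ^ z := by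
  rw [← zpow_add_one₀ (ne_of_gt (hd0' d hd))]
  norm_num

lemma zpow_anti' (d : ℕ) (hd : 2 ≤ d) {y z : ℤ} (h : y ≤ z) : (d:ℝ) ^ y ≤ (d:ℝ) ^ z :=
  zpow_le_zpow_right₀ (le_of_lt (hd1' d hd)) h

lemma indexN₀_eq (d : ℕ) (hd : 2 ≤ d) (n : ℕ) (y : ℝ)
    (h1 : 1 - (d:ℝ) ^ (-(n:ℤ)) ≤ y) (h2 : y < 1 - (d:ℝ) ^ (-(n:ℤ) - 1)) :
    indexN₀ d y = n := by
  have hmem : n ∈ {m : ℕ | y < 1 - (d:ℝ) ^ (-(m:ℤ) - 1)} := h2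
  refine le_antisymm (Nat.sInf_le hmem) ?_
  by_contra h
  push_neg at h
  have hm := Nat.sInf_mem (⟨n, hmem⟩ : {m : ℕ | y < 1 - (d:ℝ) ^ (-(m:ℤ) - 1)}.Nonempty)
  simp only [Set.mem_setOf_eq] at hm
  have hlt : indexN₀ d y < n := h
  have hle : (-(n:ℤ)) ≤ -(indexN₀ d y : ℤ) - 1 := by omega
  have := zpow_anti' d hd hle
  have hm' : y < 1 - (d:ℝ) ^ (-(indexN₀ d y : ℤ) - 1) := hm
  linarith

lemma indexN₀_spec (d : ℕ) (hd : 2 ≤ d) (y : ℝ) (h0 : 0 ≤ y) (h1 : y < 1) :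
    1 - (d:ℝ) ^ (-(indexN₀ d y : ℤ)) ≤ y ∧ y < 1 - (d:ℝ) ^ (-(indexN₀ d y : ℤ) - 1) := by
  have hne : {m : ℕ | y < 1 - (d:ℝ) ^ (-(m:ℤ) - 1)}.Nonempty := by
    obtain ⟨m, hm⟩ := exists_pow_lt_of_lt_one (show (0:ℝ) < 1 - y by linarith)
      (show (d:ℝ)⁻¹ < 1 from inv_lt_one_of_one_lt₀ (hd1' d hd))
    refine ⟨m, ?_⟩
    have heq : (d:ℝ) ^ (-(m:ℤ)) = ((d:ℝ)⁻¹) ^ m := by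
      rw [inv_pow, ← zpow_natCast, ← zpow_neg]
    have hle : (d:ℝ) ^ (-(m:ℤ) - 1) ≤ (d:ℝ) ^ (-(m:ℤ)) := zpow_anti' d hd (by omega)
    simp only [Set.mem_setOf_eq]
    rw [heq] at hle
    linarith
  constructor
  · cases hn : indexN₀ d y with
    | zero => simp [zpow_zero]; linarith
    | succ m =>
      have hlt : m < sInf {n : ℕ | y < 1 - (d:ℝ) ^ (-(n:ℤ) - 1)} := by
        unfold indexN₀ at hn; omega
      have hm := Nat.notMem_of_lt_sInf hlt
      simp only [Set.mem_setOf_eq, not_lt] at hm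
      have he : (-(↑(m+1):ℤ)) = -(m:ℤ) - 1 := by push_cast; ring
      rw [he]
      exact hm
  · exact Nat.sInf_mem hne

lemma realOdometer_mem (d : ℕ) (hd : 2 ≤ d) (y : ℝ) (h0 : 0 ≤ y) (h1 : y < 1) :
    0 ≤ realOdometer d y ∧ realOdometer d y < (d:ℝ) ^ (-(indexN₀ d y : ℤ)) := by
  obtain ⟨ha, hb⟩ := indexN₀_spec d hd y h0 h1
  have hp : 0 < (d:ℝ) ^ (-(indexN₀ d y : ℤ) - 1) := zpow_pos (hd0' d hd) _
  unfold realOdometer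
  constructor <;> linarith

lemma realOdometer_lt_one (d : ℕ) (hd : 2 ≤ d) (y : ℝ) (h0 : 0 ≤ y) (h1 : y < 1) :
    realOdometer d y < 1 := by
  have := (realOdometer_mem d hd y h0 h1).2
  have h2 : (d:ℝ) ^ (-(indexN₀ d y : ℤ)) ≤ 1 := by
    have := zpow_anti' d hd (show -(indexN₀ d y : ℤ) ≤ 0 by omega)
    simpa using this
  linarith

lemma odometer_step (d : ℕ) (hd : 2 ≤ d) (y : ℝ) (h0 : 0 ≤ y) (h1 : y < ((d:ℝ))⁻¹)
    (i : ℕ) (hi : i + 2 ≤ d) :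
    realOdometer d (y + (i:ℝ) * (d:ℝ)⁻¹) = y + ((i:ℝ)+1) * (d:ℝ)⁻¹ := by
  have hD := hd0' d hd
  have hDinv : (d:ℝ) * (d:ℝ)⁻¹ = 1 := mul_inv_cancel₀ (ne_of_gt hD)
  have hinv0 : (0:ℝ) ≤ (d:ℝ)⁻¹ := by positivity
  have hiR : (i:ℝ) + 2 ≤ (d:ℝ) := by exact_mod_cast hi
  have hidx : indexN₀ d (y + (i:ℝ) * (d:ℝ)⁻¹) = 0 := by
    apply indexN₀_eq d hd
    · simp only [Nat.cast_zero, neg_zero, zpow_zero]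
      have : 0 ≤ (i:ℝ) * (d:ℝ)⁻¹ := by positivity
      linarith
    · have he : (d:ℝ) ^ (-(0:ℕ):ℤ) - 1 = 0 := by norm_num
      have he2 : (d:ℝ) ^ ((-(0:ℕ):ℤ) - 1) = (d:ℝ)⁻¹ := by
        norm_num
      rw [he2]
      -- y + i/d < 1 - 1/d  ⟸  (i+2)/d ≤ 1
      have key : ((i:ℝ) + 2) * (d:ℝ)⁻¹ ≤ 1 := by
        have := mul_le_mul_of_nonneg_right hiR hinv0
        rwa [hDinv] at this
      nlinarith
  unfold realOdometer
  rw [hidx]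
  norm_num
  ring

lemma odometer_last (d : ℕ) (hd : 2 ≤ d) (y : ℝ) (h0 : 0 ≤ y) (h1 : y < (d:ℝ)⁻¹) :
    realOdometer d (y + ((d:ℝ) - 1) * (d:ℝ)⁻¹) = (d:ℝ)⁻¹ * realOdometer d ((d:ℝ) * y) := by
  have hD := hd0' d hd
  have hDinv : (d:ℝ) * (d:ℝ)⁻¹ = 1 := mul_inv_cancel₀ (ne_of_gt hD)
  have hinv0 : (0:ℝ) ≤ (d:ℝ)⁻¹ := by positivity
  have hinvpos : (0:ℝ) < (d:ℝ)⁻¹ := by positivity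
  have hdy0 : 0 ≤ (d:ℝ) * y := by positivity
  have hdy1 : (d:ℝ) * y < 1 := by
    have := mul_lt_mul_of_pos_left h1 hD
    rwa [hDinv] at this
  obtain ⟨hl, hu⟩ := indexN₀_spec d hd ((d:ℝ)*y) hdy0 hdy1
  set m := indexN₀ d ((d:ℝ)*y) with hm
  have hinv1 : (d:ℝ)^(-(m:ℤ)) * (d:ℝ)⁻¹ = (d:ℝ)^(-(m:ℤ)-1) := by
    rw [← zpow_mul_d d hd (-(m:ℤ)), mul_assoc, hDinv, mul_one]
  have hinv2 : (d:ℝ)^(-(m:ℤ)-1) * (d:ℝ)⁻¹ = (d:ℝ)^(-(m:ℤ)-2) := by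
    have h' : (d:ℝ)^(-(m:ℤ)-2) * (d:ℝ) = (d:ℝ)^(-(m:ℤ)-1) := by
      have := zpow_mul_d d hd (-(m:ℤ)-1)
      rw [show (-(m:ℤ)-1-1) = -(m:ℤ)-2 by ring] at this
      exact this
    rw [← h', mul_assoc, hDinv, mul_one]
  have exp2 : ((d:ℝ)-1) * (d:ℝ)⁻¹ = 1 - (d:ℝ)⁻¹ := by rw [sub_mul, one_mul, hDinv]
  have key1 : (1 - (d:ℝ)^(-(m:ℤ))) * (d:ℝ)⁻¹ ≤ y := by
    have h := mul_le_mul_of_nonneg_right hl hinv0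
    rwa [mul_comm (d:ℝ) y, mul_assoc, hDinv, mul_one] at h
  have key2 : y < (1 - (d:ℝ)^(-(m:ℤ)-1)) * (d:ℝ)⁻¹ := by
    have h := mul_lt_mul_of_pos_right hu hinvpos
    rwa [mul_comm (d:ℝ) y, mul_assoc, hDinv, mul_one] at h
  have hidx : indexN₀ d (y + ((d:ℝ)-1) * (d:ℝ)⁻¹) = m + 1 := by
    apply indexN₀_eq d hd
    · rw [show (-(↑(m+1):ℤ)) = -(m:ℤ) - 1 by push_cast; ring]
      nlinarith [key1, exp2, hinv1]
    · rw [show (-(↑(m+1):ℤ) - 1) = -(m:ℤ) - 2 by push_cast; ring]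
      nlinarith [key2, exp2, hinv2]
  unfold realOdometer
  rw [hidx, ← hm]
  rw [show (-(↑(m+1):ℤ)) = -(m:ℤ) - 1 by push_cast; ring,
      show (-(m:ℤ) - 1 - 1) = -(m:ℤ) - 2 by ring]
  linear_combination (1 - y) * hDinv - hinv1 - hinv2

lemma chaconPartial_nonneg (d : ℕ) (a : ℕ → ℕ) (n : ℕ) : 0 ≤ chaconPartial d a n :=
  Finset.sum_nonneg fun j _ => by positivity

lemma chaconPartial_succ (d : ℕ) (a : ℕ → ℕ) (n : ℕ) :
    chaconPartial d a (n+1) = chaconPartial d a n + (a n : ℝ) * (d:ℝ) ^ (-(n:ℤ) - 1) :=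
  Finset.sum_range_succ _ _

lemma chaconPartial_mono (d : ℕ) (a : ℕ → ℕ) {m n : ℕ} (h : m ≤ n) :
    chaconPartial d a m ≤ chaconPartial d a n :=
  Finset.sum_le_sum_of_subset_of_nonneg (Finset.range_subset_range.2 h) (fun j _ _ => by positivity)

lemma chaconIndex_lt_one (d : ℕ) (a : ℕ → ℕ) (x : ℝ) (hx : x < 1) :
    chaconIndex d a x = indexN₀ d x := by
  unfold chaconIndex indexN₀; rw [if_pos hx]

lemma chaconIndex_spacer (d : ℕ) (a : ℕ → ℕ) (n : ℕ) (x : ℝ)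
    (h1 : 1 + chaconPartial d a n ≤ x) (h2 : x < 1 + chaconPartial d a (n+1)) :
    chaconIndex d a x = n := by
  have hx1 : ¬ x < 1 := by
    have := chaconPartial_nonneg d a n; push_neg; linarith
  unfold chaconIndex
  rw [if_neg hx1]
  have hmem : n ∈ {m : ℕ | x < 1 + chaconPartial d a (m+1)} := h2
  refine le_antisymm (Nat.sInf_le hmem) ?_
  by_contra h
  push_neg at h
  have hm := Nat.sInf_mem (⟨n, hmem⟩ : {m : ℕ | x < 1 + chaconPartial d a (m+1)}.Nonempty)
  simp only [Set.mem_setOf_eq] at hm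
  have : chaconPartial d a (sInf {m : ℕ | x < 1 + chaconPartial d a (m+1)} + 1)
      ≤ chaconPartial d a n := chaconPartial_mono d a (by omega)
  linarith

lemma chaconMap_eval₁ (d : ℕ) (a : ℕ → ℕ) (x : ℝ) (hx : x < 1)
    (h : x < 1 - 2 * (d:ℝ) ^ (-(chaconIndex d a x : ℤ) - 1)) :
    chaconMap d a x = x - (1 - (d:ℝ) ^ (-(chaconIndex d a x : ℤ)))
      + (d:ℝ) ^ (-(chaconIndex d a x : ℤ) - 1) := by
  simp only [chaconMap]; rw [if_pos hx, if_pos h]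

lemma chaconMap_eval₂ (d : ℕ) (a : ℕ → ℕ) (x : ℝ) (hx : x < 1)
    (h : ¬ x < 1 - 2 * (d:ℝ) ^ (-(chaconIndex d a x : ℤ) - 1)) :
    chaconMap d a x = x + 2 * (d:ℝ) ^ (-(chaconIndex d a x : ℤ) - 1)
      + chaconPartial d a (chaconIndex d a x) := by
  simp only [chaconMap]; rw [if_pos hx, if_neg h]

lemma chaconMap_eval₃ (d : ℕ) (a : ℕ → ℕ) (x : ℝ) (hx : ¬ x < 1)
    (h : 1 + chaconPartial d a (chaconIndex d a x + 1) - (d:ℝ) ^ (-(chaconIndex d a x : ℤ) - 1) ≤ x) :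
    chaconMap d a x = x - (1 + chaconPartial d a (chaconIndex d a x + 1)
        - (d:ℝ) ^ (-(chaconIndex d a x : ℤ) - 1))
      + ((d:ℝ) - 1) * (d:ℝ) ^ (-(chaconIndex d a x : ℤ) - 1) := by
  simp only [chaconMap]; rw [if_neg hx, if_pos h]

lemma chaconMap_eval₄ (d : ℕ) (a : ℕ → ℕ) (x : ℝ) (hx : ¬ x < 1)
    (h : ¬ (1 + chaconPartial d a (chaconIndex d a x + 1) - (d:ℝ) ^ (-(chaconIndex d a x : ℤ) - 1) ≤ x)) :
    chaconMap d a x = x + (d:ℝ) ^ (-(chaconIndex d a x : ℤ) - 1) := by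
  simp only [chaconMap]; rw [if_neg hx, if_neg h]

lemma chacon_base (d : ℕ) (a : ℕ → ℕ) (hd : 2 ≤ d) (ha : ∀ j, a j = 1 ∨ a j = 2) (x : ℝ)
    (h0 : 0 ≤ x) (h1 : x < 1) :
    ∃ r : ℕ, 1 ≤ r ∧ (chaconMap d a)^[r] x = realOdometer d x ∧
      ∀ m, 1 ≤ m → m < r →
        ¬ (0 ≤ (chaconMap d a)^[m] x ∧ (chaconMap d a)^[m] x < 1) := by
  have hD := hd0' d hd
  obtain ⟨hl, hu⟩ := indexN₀_spec d hd x h0 h1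
  set n := indexN₀ d x with hn
  have hepos : 0 < (d:ℝ) ^ (-(n:ℤ) - 1) := zpow_pos hD _
  have heE : (d:ℝ) ^ (-(n:ℤ) - 1) * (d:ℝ) = (d:ℝ) ^ (-(n:ℤ)) := zpow_mul_d d hd _
  have hidx : chaconIndex d a x = n := chaconIndex_lt_one d a x h1
  by_cases hcA : x < 1 - 2 * (d:ℝ) ^ (-(n:ℤ) - 1)
  · refine ⟨1, le_refl 1, ?_, by intro m hm1 hm2; omega⟩
    rw [Function.iterate_one,
      chaconMap_eval₁ d a x h1 (by rw [hidx]; exact hcA), hidx]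
    unfold realOdometer
    rw [← hn]
  · have hxge : 1 - 2 * (d:ℝ) ^ (-(n:ℤ) - 1) ≤ x := not_lt.1 hcA
    have han1 : (1:ℝ) ≤ (a n : ℝ) := by rcases ha n with h | h <;> rw [h] <;> norm_num
    have hP0 : 0 ≤ chaconPartial d a n := chaconPartial_nonneg d a n
    have hPsucc := chaconPartial_succ d a n
    have hTx : chaconMap d a x
        = x + 2 * (d:ℝ) ^ (-(n:ℤ) - 1) + chaconPartial d a n := by
      rw [chaconMap_eval₂ d a x h1 (by rw [hidx]; exact hcA), hidx]
    have hidx1 : chaconIndex d a (x + 2 * (d:ℝ) ^ (-(n:ℤ) - 1) + chaconPartial d a n) = n := by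
      apply chaconIndex_spacer
      · linarith
      · rw [hPsucc]
        nlinarith [mul_nonneg (by linarith : (0:ℝ) ≤ (a n : ℝ) - 1) hepos.le]
    have hx₁n : ¬ (x + 2 * (d:ℝ) ^ (-(n:ℤ) - 1) + chaconPartial d a n) < 1 := by
      push_neg; linarith
    rcases ha n with h1n | h2n
    · -- a n = 1, return time 2
      have hcond : 1 + chaconPartial d a (n+1) - (d:ℝ) ^ (-(n:ℤ) - 1)
          ≤ x + 2 * (d:ℝ) ^ (-(n:ℤ) - 1) + chaconPartial d a n := by
        rw [hPsucc, h1n]; push_cast; linarith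
      have hTx₁ : chaconMap d a (x + 2 * (d:ℝ) ^ (-(n:ℤ) - 1) + chaconPartial d a n)
          = (x + 2 * (d:ℝ) ^ (-(n:ℤ) - 1) + chaconPartial d a n)
            - (1 + chaconPartial d a (n+1) - (d:ℝ) ^ (-(n:ℤ) - 1))
            + ((d:ℝ) - 1) * (d:ℝ) ^ (-(n:ℤ) - 1) := by
        rw [chaconMap_eval₃ d a _ hx₁n (by rw [hidx1]; exact hcond), hidx1]
      refine ⟨2, by omega, ?_, ?_⟩
      · rw [show (2:ℕ) = 1 + 1 from rfl, Function.iterate_add_apply, Function.iterate_one,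
          hTx, hTx₁, hPsucc, h1n]
        unfold realOdometer
        rw [← hn]
        push_cast
        linear_combination heE
      · intro m hm1 hm2
        have hm : m = 1 := by omega
        subst hm
        rw [Function.iterate_one, hTx]
        push_neg
        intro _
        linarith
    · -- a n = 2, return time 3
      have hcond2 : ¬ (1 + chaconPartial d a (n+1) - (d:ℝ) ^ (-(n:ℤ) - 1)
          ≤ x + 2 * (d:ℝ) ^ (-(n:ℤ) - 1) + chaconPartial d a n) := by
        rw [hPsucc, h2n]; push_cast; push_neg; linarith
      have hTx₁ : chaconMap d a (x + 2 * (d:ℝ) ^ (-(n:ℤ) - 1) + chaconPartial d a n)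
          = x + 2 * (d:ℝ) ^ (-(n:ℤ) - 1) + chaconPartial d a n + (d:ℝ) ^ (-(n:ℤ) - 1) := by
        rw [chaconMap_eval₄ d a _ hx₁n (by rw [hidx1]; exact hcond2), hidx1]
      have hidx2 : chaconIndex d a
          (x + 2 * (d:ℝ) ^ (-(n:ℤ) - 1) + chaconPartial d a n + (d:ℝ) ^ (-(n:ℤ) - 1)) = n := by
        apply chaconIndex_spacer
        · linarith
        · rw [hPsucc, h2n]; push_cast; linarith
      have hx₂n : ¬ (x + 2 * (d:ℝ) ^ (-(n:ℤ) - 1) + chaconPartial d a n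
          + (d:ℝ) ^ (-(n:ℤ) - 1)) < 1 := by
        push_neg; linarith
      have hcond3 : 1 + chaconPartial d a (n+1) - (d:ℝ) ^ (-(n:ℤ) - 1)
          ≤ x + 2 * (d:ℝ) ^ (-(n:ℤ) - 1) + chaconPartial d a n + (d:ℝ) ^ (-(n:ℤ) - 1) := by
        rw [hPsucc, h2n]; push_cast; linarith
      have hTx₂ : chaconMap d a (x + 2 * (d:ℝ) ^ (-(n:ℤ) - 1) + chaconPartial d a n
            + (d:ℝ) ^ (-(n:ℤ) - 1))
          = (x + 2 * (d:ℝ) ^ (-(n:ℤ) - 1) + chaconPartial d a n + (d:ℝ) ^ (-(n:ℤ) - 1))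
            - (1 + chaconPartial d a (n+1) - (d:ℝ) ^ (-(n:ℤ) - 1))
            + ((d:ℝ) - 1) * (d:ℝ) ^ (-(n:ℤ) - 1) := by
        rw [chaconMap_eval₃ d a _ hx₂n (by rw [hidx2]; exact hcond3), hidx2]
      refine ⟨3, by omega, ?_, ?_⟩
      · rw [show (3:ℕ) = 1 + 1 + 1 from rfl, Function.iterate_add_apply,
          Function.iterate_add_apply, Function.iterate_one, hTx, hTx₁, hTx₂, hPsucc, h2n]
        unfold realOdometer
        rw [← hn]
        push_cast
        linear_combination heE
      · intro m hm1 hm2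
        have hm : m = 1 ∨ m = 2 := by omega
        rcases hm with hm | hm <;> subst hm
        · rw [Function.iterate_one, hTx]
          push_neg; intro _; linarith
        · rw [show (2:ℕ) = 1 + 1 from rfl, Function.iterate_add_apply, Function.iterate_one,
            hTx, hTx₁]
          push_neg; intro _; linarith

lemma chacon_key (d : ℕ) (a : ℕ → ℕ) (hd : 7 ≤ d) (ha : ∀ j, a j = 1 ∨ a j = 2) :
    ∀ k : ℕ, ∀ x : ℝ, 0 ≤ x → x < (d:ℝ) ^ (-(k:ℤ)) →
    ∃ r : ℕ, 1 ≤ r ∧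
      (chaconMap d a)^[r] x = (d:ℝ) ^ (-(k:ℤ)) * realOdometer d ((d:ℝ) ^ k * x) ∧
      ∀ m, 1 ≤ m → m < r →
        ¬ (0 ≤ (chaconMap d a)^[m] x ∧ (chaconMap d a)^[m] x < (d:ℝ) ^ (-(k:ℤ))) := by
  have hd2 : 2 ≤ d := by omega
  intro k
  induction k with
  | zero =>
    intro x h0 h1
    simp only [Nat.cast_zero, neg_zero, zpow_zero, pow_zero, one_mul] at h1 ⊢
    exact chacon_base d a hd2 ha x h0 h1
  | succ k IH =>
    intro x h0 h1
    have hD := hd0' d hd2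
    have hDne : (d:ℝ) ≠ 0 := ne_of_gt hD
    have hDinv : (d:ℝ) * (d:ℝ)⁻¹ = 1 := mul_inv_cancel₀ hDne
    have hcast : (-(↑(k+1):ℤ)) = -(k:ℤ) - 1 := by push_cast; ring
    rw [hcast] at h1 ⊢
    have hepos : 0 < (d:ℝ) ^ (-(k:ℤ) - 1) := zpow_pos hD _
    have hEpos : 0 < (d:ℝ) ^ (-(k:ℤ)) := zpow_pos hD _
    have heE : (d:ℝ) ^ (-(k:ℤ) - 1) * (d:ℝ) = (d:ℝ) ^ (-(k:ℤ)) := zpow_mul_d d hd2 _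
    have hk1 : (d:ℝ) ^ k * (d:ℝ) ^ (-(k:ℤ)) = 1 := by
      rw [← zpow_natCast (d:ℝ) k, ← zpow_add₀ hDne]; norm_num
    have hk2 : (d:ℝ) ^ k * (d:ℝ) ^ (-(k:ℤ) - 1) = (d:ℝ)⁻¹ := by
      rw [← zpow_natCast (d:ℝ) k, ← zpow_add₀ hDne,
        show ((k:ℤ) + (-(k:ℤ) - 1)) = -1 by ring, zpow_neg_one]
    have hxk0 : 0 ≤ (d:ℝ) ^ k * x := by positivity
    have hxk : (d:ℝ) ^ k * x < (d:ℝ)⁻¹ := by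
      have := mul_lt_mul_of_pos_left h1 (show (0:ℝ) < (d:ℝ)^k by positivity)
      rwa [hk2] at this
    have heEle : (d:ℝ) ^ (-(k:ℤ) - 1) ≤ (d:ℝ) ^ (-(k:ℤ)) := zpow_anti' d hd2 (by omega)
    -- inner induction along the d sub-columns
    have inner : ∀ i : ℕ, i ≤ d - 1 → ∃ r : ℕ, (i = 0 → r = 0) ∧
        (chaconMap d a)^[r] x = x + (i:ℝ) * (d:ℝ) ^ (-(k:ℤ) - 1) ∧
        ∀ m, 1 ≤ m → m < r →
          ¬ (0 ≤ (chaconMap d a)^[m] x ∧ (chaconMap d a)^[m] x < (d:ℝ) ^ (-(k:ℤ) - 1)) := by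
      intro i
      induction i with
      | zero =>
        intro _
        exact ⟨0, fun _ => rfl, by simp, fun m hm1 hm2 => absurd hm2 (by omega)⟩
      | succ i ih =>
        intro hi
        obtain ⟨r, hr0, hrx, hrno⟩ := ih (by omega)
        have hiR : (i:ℝ) + 2 ≤ (d:ℝ) := by exact_mod_cast (show i + 2 ≤ d by omega)
        have hie : 0 ≤ (i:ℝ) * (d:ℝ) ^ (-(k:ℤ) - 1) :=
          mul_nonneg (Nat.cast_nonneg i) hepos.le
        have hw0 : 0 ≤ x + (i:ℝ) * (d:ℝ) ^ (-(k:ℤ) - 1) := by linarith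
        have hwE : x + (i:ℝ) * (d:ℝ) ^ (-(k:ℤ) - 1) < (d:ℝ) ^ (-(k:ℤ)) := by
          nlinarith [mul_nonneg (by linarith : (0:ℝ) ≤ (d:ℝ) - ((i:ℝ) + 2)) hepos.le]
        obtain ⟨s, hs1, hsval, hsno⟩ := IH (x + (i:ℝ) * (d:ℝ) ^ (-(k:ℤ) - 1)) hw0 hwE
        have hDkw : (d:ℝ) ^ k * (x + (i:ℝ) * (d:ℝ) ^ (-(k:ℤ) - 1))
            = (d:ℝ) ^ k * x + (i:ℝ) * (d:ℝ)⁻¹ := by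
          rw [mul_add, show (d:ℝ)^k * ((i:ℝ) * (d:ℝ)^(-(k:ℤ)-1))
            = (i:ℝ) * ((d:ℝ)^k * (d:ℝ)^(-(k:ℤ)-1)) by ring, hk2]
        have hstep : realOdometer d ((d:ℝ) ^ k * (x + (i:ℝ) * (d:ℝ) ^ (-(k:ℤ) - 1)))
            = (d:ℝ) ^ k * x + ((i:ℝ) + 1) * (d:ℝ)⁻¹ := by
          rw [hDkw]
          exact odometer_step d hd2 ((d:ℝ)^k * x) hxk0 hxk i (by omega)
        have hval : (chaconMap d a)^[s + r] x = x + ((i:ℝ) + 1) * (d:ℝ) ^ (-(k:ℤ) - 1) := by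
          rw [Function.iterate_add_apply, hrx, hsval, hstep]
          linear_combination x * hk1 - ((i:ℝ) + 1) * (d:ℝ)⁻¹ * heE
            + ((i:ℝ) + 1) * ((d:ℝ) ^ (-(k:ℤ) - 1)) * hDinv
        refine ⟨s + r, fun h => absurd h (Nat.succ_ne_zero i), by push_cast at hval ⊢; exact hval, ?_⟩
        intro m hm1 hm2
        rcases lt_trichotomy m r with h | h | h
        · exact hrno m hm1 h
        · subst h
          rw [hrx]
          rcases Nat.eq_zero_or_pos i with hi0 | hi0
          · exact absurd (hr0 hi0) (by omega)
          · have h1i : (1:ℝ) ≤ (i:ℝ) := by exact_mod_cast hi0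
            push_neg
            intro _
            nlinarith [mul_le_mul_of_nonneg_right h1i hepos.le]
        · have hm' : m = (m - r) + r := by omega
          rw [hm', Function.iterate_add_apply, hrx]
          have := hsno (m - r) (by omega) (by omega)
          push_neg at this ⊢
          intro hge
          have := this hge
          linarith
    -- final segment
    obtain ⟨r, hr0, hrx, hrno⟩ := inner (d - 1) (le_refl _)
    have hcastd : ((d - 1 : ℕ) : ℝ) = (d:ℝ) - 1 := by
      push_cast [Nat.cast_sub (show 1 ≤ d by omega)]; ring
    rw [hcastd] at hrx
    have hw0 : 0 ≤ x + ((d:ℝ) - 1) * (d:ℝ) ^ (-(k:ℤ) - 1) := by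
      have : 0 ≤ ((d:ℝ) - 1) * (d:ℝ) ^ (-(k:ℤ) - 1) :=
        mul_nonneg (by linarith [hd1' d hd2]) hepos.le
      linarith
    have hwE : x + ((d:ℝ) - 1) * (d:ℝ) ^ (-(k:ℤ) - 1) < (d:ℝ) ^ (-(k:ℤ)) := by
      nlinarith [heE]
    obtain ⟨s, hs1, hsval, hsno⟩ := IH (x + ((d:ℝ) - 1) * (d:ℝ) ^ (-(k:ℤ) - 1)) hw0 hwE
    have hDkw : (d:ℝ) ^ k * (x + ((d:ℝ) - 1) * (d:ℝ) ^ (-(k:ℤ) - 1))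
        = (d:ℝ) ^ k * x + ((d:ℝ) - 1) * (d:ℝ)⁻¹ := by
      rw [mul_add, show (d:ℝ)^k * (((d:ℝ) - 1) * (d:ℝ)^(-(k:ℤ)-1))
        = ((d:ℝ) - 1) * ((d:ℝ)^k * (d:ℝ)^(-(k:ℤ)-1)) by ring, hk2]
    have hlast : realOdometer d ((d:ℝ) ^ k * (x + ((d:ℝ) - 1) * (d:ℝ) ^ (-(k:ℤ) - 1)))
        = (d:ℝ)⁻¹ * realOdometer d ((d:ℝ) ^ (k+1) * x) := by
      rw [hDkw, odometer_last d hd2 ((d:ℝ)^k * x) hxk0 hxk,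
        show (d:ℝ) * ((d:ℝ)^k * x) = (d:ℝ)^(k+1) * x by rw [pow_succ]; ring]
    refine ⟨s + r, by omega, ?_, ?_⟩
    · rw [Function.iterate_add_apply, hrx, hsval, hlast, ← mul_assoc,
        show (d:ℝ)^(-(k:ℤ)) * (d:ℝ)⁻¹ = (d:ℝ)^(-(k:ℤ)-1) by
          rw [← heE, mul_assoc, hDinv, mul_one]]
    · intro m hm1 hm2
      rcases lt_trichotomy m r with h | h | h
      · exact hrno m hm1 h
      · subst h
        rw [hrx]
        have hd2R : (2:ℝ) ≤ (d:ℝ) := by exact_mod_cast hd2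
        have h1d : (1:ℝ) ≤ (d:ℝ) - 1 := by linarith
        push_neg
        intro _
        nlinarith [mul_le_mul_of_nonneg_right h1d hepos.le]
      · have hm' : m = (m - r) + r := by omega
        rw [hm', Function.iterate_add_apply, hrx]
        have := hsno (m - r) (by omega) (by omega)
        push_neg at this ⊢
        intro hge
        have := this hge
        linarith


/-- For every `k ∈ ℕ` and every `x ∈ A_k = [0, d^{-k})`, the first return time
`r(x) = min{m ≥ 1 : T_α^m(x) ∈ A_k}` exists, and the induced map of `T_α` on `A_k` is
conjugate to the real odometer: `T_α^{r(x)}(x) = d^{-k}·V(d^k·x)`. -/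
theorem chacon_induced_map_eq_odometer (d : ℕ) (hd_odd : Odd d) (hd7 : 7 ≤ d)
    (a : ℕ → ℕ) (ha : ∀ j, a j = 1 ∨ a j = 2)
    (k : ℕ) (x : ℝ) (hx₀ : 0 ≤ x) (hx₁ : x < (d : ℝ) ^ (-(k : ℤ))) :
    (∃ m : ℕ, 1 ≤ m ∧ (chaconMap d a)^[m] x ∈ Set.Ico (0 : ℝ) ((d : ℝ) ^ (-(k : ℤ)))) ∧
      (chaconMap d a)^[sInf {m : ℕ | 1 ≤ m ∧
          (chaconMap d a)^[m] x ∈ Set.Ico (0 : ℝ) ((d : ℝ) ^ (-(k : ℤ)))}] x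
        = (d : ℝ) ^ (-(k : ℤ)) * realOdometer d ((d : ℝ) ^ k * x) := by
  have hd2 : 2 ≤ d := by omega
  obtain ⟨r, hr1, hrval, hrno⟩ := chacon_key d a hd7 ha k x hx₀ hx₁
  have hD := hd0' d hd2
  have hk1 : (d:ℝ) ^ k * (d:ℝ) ^ (-(k:ℤ)) = 1 := by
    rw [← zpow_natCast (d:ℝ) k, ← zpow_add₀ (ne_of_gt hD)]; norm_num
  have h0' : 0 ≤ (d:ℝ) ^ k * x := by positivity
  have h1' : (d:ℝ) ^ k * x < 1 := by
    have := mul_lt_mul_of_pos_left hx₁ (show (0:ℝ) < (d:ℝ)^k by positivity)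
    rwa [hk1] at this
  obtain ⟨hv0, hv1⟩ := realOdometer_mem d hd2 _ h0' h1'
  have hvlt1 := realOdometer_lt_one d hd2 _ h0' h1'
  have hEpos : 0 < (d:ℝ) ^ (-(k:ℤ)) := zpow_pos hD _
  have hmem : r ∈ {m : ℕ | 1 ≤ m ∧
      (chaconMap d a)^[m] x ∈ Set.Ico (0:ℝ) ((d:ℝ) ^ (-(k:ℤ)))} := by
    refine ⟨hr1, ?_⟩
    rw [hrval, Set.mem_Ico]
    refine ⟨mul_nonneg hEpos.le hv0, ?_⟩
    have := mul_lt_mul_of_pos_left hvlt1 hEpos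
    rwa [mul_one] at this
  have hinf := Nat.sInf_mem (⟨r, hmem⟩ : Set.Nonempty {m : ℕ | 1 ≤ m ∧
      (chaconMap d a)^[m] x ∈ Set.Ico (0:ℝ) ((d:ℝ) ^ (-(k:ℤ)))})
  have heq : sInf {m : ℕ | 1 ≤ m ∧
      (chaconMap d a)^[m] x ∈ Set.Ico (0:ℝ) ((d:ℝ) ^ (-(k:ℤ)))} = r := by
    refine le_antisymm (Nat.sInf_le hmem) ?_
    by_contra h
    push_neg at h
    obtain ⟨h1m, h2m⟩ := hinf
    rw [Set.mem_Ico] at h2m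
    exact hrno _ h1m h h2m
  exact ⟨⟨r, hmem.1, hmem.2⟩, by rw [heq, hrval]⟩

end
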